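/- arXiv:2505.00728 — 2 statements merged into one kernel-verified Lean document; each statement's English description precedes it below -/
import Mathlib

section
/- Every path P = v_1…v_k with at least two arcs (k ≥ 3) that is monotone with respect to a charge drop schedule C contains a short monotone subpath with respect to C: there exist indices i < j with j − i ∈ {2, 3} such that the subpath v_i…v_j is monotone with respect to the charge drop schedule (0, d_{i+1}, …, d_j) obtained by restricting C to the subpath (with no drop at the subpath's first vertex). -/
open Finset

namespace EV

noncomputable section

/-- Charge after traversing `i` arcs of a path with arc gains `g`, battery capacity `B`,
initial charge `b`. -/
def charge (B b : ℝ) (g : ℕ → ℝ) : ℕ → ℝ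
  | 0 => b
  | i + 1 => min (charge B b g i + g i) B

/-- The traversal of the path with `n` arcs is feasible from initial charge `b`. -/
def Feasible (B b : ℝ) (g : ℕ → ℝ) (n : ℕ) : Prop :=
  ∀ i < n, 0 ≤ charge B b g i + g i

open Classical in
/-- Maximum final charge `α_b(P)` for a path `P` with `n` arc gains `g`,
as an extended real (`⊥ = -∞` if the traversal is infeasible). -/
def alpha (B b : ℝ) (g : ℕ → ℝ) (n : ℕ) : EReal :=
  if Feasible B b g n then ((charge B b g n : ℝ) : EReal) else ⊥

/-- Gain of the `i`-th vertex (0-indexed): the sum of the first `i` arc gains. -/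
def vGain (g : ℕ → ℝ) (i : ℕ) : ℝ := ∑ t ∈ Finset.range i, g t

/-- `P` is traversable: `α_B(P) ≥ 0`, i.e. feasible from a full battery. -/
def Traversable (B : ℝ) (g : ℕ → ℝ) (n : ℕ) : Prop := Feasible B B g n

/-- `C` is a charge drop schedule for a path with `n` arcs (vertices `0,…,n`):
no drop at the first vertex, all drops nonnegative. -/
def Schedule (C : ℕ → ℝ) (n : ℕ) : Prop := C 0 = 0 ∧ ∀ i ≤ n, 0 ≤ C i

/-- Gain of vertex `i` with respect to the charge drop schedule `C`. -/
def cGain (g C : ℕ → ℝ) (i : ℕ) : ℝ := vGain g i - ∑ t ∈ Finset.range (i + 1), C t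

/-- `P` (with `n` arcs) is ascending with respect to the schedule `C`. -/
def AscendingC (B : ℝ) (g C : ℕ → ℝ) (n : ℕ) : Prop :=
  Traversable B g n ∧ ∀ i ≤ n, 0 ≤ cGain g C i ∧ cGain g C i ≤ cGain g C n

/-- `P` (with `n` arcs) is descending with respect to the schedule `C`. -/
def DescendingC (B : ℝ) (g C : ℕ → ℝ) (n : ℕ) : Prop :=
  Traversable B g n ∧ ∀ i ≤ n, cGain g C n ≤ cGain g C i ∧ cGain g C i ≤ 0

/-- `P` is monotone with respect to the schedule `C`. -/
def MonotoneC (B : ℝ) (g C : ℕ → ℝ) (n : ℕ) : Prop :=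
  AscendingC B g C n ∨ DescendingC B g C n

/-- Ascending with respect to the zero schedule. -/
def Ascending (B : ℝ) (g : ℕ → ℝ) (n : ℕ) : Prop := AscendingC B g (fun _ => 0) n

/-- Descending with respect to the zero schedule. -/
def Descending (B : ℝ) (g : ℕ → ℝ) (n : ℕ) : Prop := DescendingC B g (fun _ => 0) n

/-- Monotone with respect to the zero schedule. -/
def MonotonePath (B : ℝ) (g : ℕ → ℝ) (n : ℕ) : Prop := Ascending B g n ∨ Descending B g n

/-- The contiguous subpath whose arcs start at arc index `a`. -/
def SubPath (g : ℕ → ℝ) (a : ℕ) : ℕ → ℝ := fun t => g (a + t)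

/-- Restriction of a charge drop schedule to the subpath starting at vertex `a`:
no drop at the subpath's first vertex. -/
def restrict (C : ℕ → ℝ) (a : ℕ) : ℕ → ℝ := fun t => if t = 0 then 0 else C (a + t)

/-- First-arc-bounded with respect to a schedule `C` (no drop at the second vertex,
and all vertex gains lie between the gains of the first two vertices). -/
def FirstArcBoundedC (g C : ℕ → ℝ) (n : ℕ) : Prop :=
  C 1 = 0 ∧
    ((0 ≤ g 0 ∧ ∀ i ≤ n, 0 ≤ cGain g C i ∧ cGain g C i ≤ g 0) ∨
     (g 0 ≤ 0 ∧ ∀ i ≤ n, g 0 ≤ cGain g C i ∧ cGain g C i ≤ 0))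

/-- Last-arc-bounded with respect to a schedule `C` (no drops at the last two vertices,
and all vertex gains lie between the gains of the last two vertices). -/
def LastArcBoundedC (g C : ℕ → ℝ) (n : ℕ) : Prop :=
  C (n - 1) = 0 ∧ C n = 0 ∧
    ((0 ≤ g (n - 1) ∧ ∀ i ≤ n, cGain g C (n - 1) ≤ cGain g C i ∧ cGain g C i ≤ cGain g C n) ∨
     (g (n - 1) < 0 ∧ ∀ i ≤ n, cGain g C n ≤ cGain g C i ∧ cGain g C i ≤ cGain g C (n - 1)))

/-- First-arc-bounded (zero schedule). -/
def FirstArcBounded (g : ℕ → ℝ) (n : ℕ) : Prop := FirstArcBoundedC g (fun _ => 0) n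

/-- Last-arc-bounded (zero schedule). -/
def LastArcBounded (g : ℕ → ℝ) (n : ℕ) : Prop := LastArcBoundedC g (fun _ => 0) n

/-- Arc-bounded: first- or last-arc-bounded. -/
def ArcBounded (g : ℕ → ℝ) (n : ℕ) : Prop := FirstArcBounded g n ∨ LastArcBounded g n

/-- A funnel: arc-bounded and containing no monotone subpath of 2 or 3 consecutive arcs. -/
def Funnel (B : ℝ) (g : ℕ → ℝ) (n : ℕ) : Prop :=
  ArcBounded g n ∧ ∀ a m, (m = 2 ∨ m = 3) → a + m ≤ n → ¬ MonotonePath B (SubPath g a) m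

/-- `j = s̄(i)`: the maximal index `j ≥ i` (among arcs of a path with `n` arcs) such that
the subpath of arcs `i,…,j` is first-arc-bounded. -/
def IsSbar (g : ℕ → ℝ) (n i j : ℕ) : Prop :=
  i ≤ j ∧ j < n ∧ FirstArcBounded (SubPath g i) (j - i + 1) ∧
    ∀ j', i ≤ j' → j' < n → FirstArcBounded (SubPath g i) (j' - i + 1) → j' ≤ j

/-- `j = s̲(i)`: the minimal index `j ≤ i` such that the subpath of arcs `j,…,i`
is last-arc-bounded. -/
def IsSlow (g : ℕ → ℝ) (n i j : ℕ) : Prop :=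
  j ≤ i ∧ i < n ∧ LastArcBounded (SubPath g j) (i - j + 1) ∧
    ∀ j', j' ≤ i → LastArcBounded (SubPath g j') (i - j' + 1) → j ≤ j'

/-- Arc gains of the walk around a cycle with `m` arc gains `g`, starting at vertex `a`. -/
def cyc (g : ℕ → ℝ) (m a : ℕ) : ℕ → ℝ := fun t => g ((a + t) % m)

/-- A walk of length `ℓ` from `x` to `y` in the directed graph with arc relation `A`. -/
def IsWalk {V : Type*} (A : V → V → Prop) (w : ℕ → V) (ℓ : ℕ) (x y : V) : Prop :=
  w 0 = x ∧ w ℓ = y ∧ ∀ t < ℓ, A (w t) (w (t + 1))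

/-- The sequence of arc gains induced by a walk `w` in a graph with gain function `g`. -/
def walkGains {V : Type*} (g : V → V → ℝ) (w : ℕ → V) : ℕ → ℝ :=
  fun t => g (w t) (w (t + 1))

/-- Key combinatorial lemma on real sequences. -/
lemma key_asc (f : ℕ → ℝ) (n : ℕ) (hn : 2 ≤ n) (hf : ∀ i ≤ n, f 0 ≤ f i ∧ f i ≤ f n) :
    ∃ a m, (m = 2 ∨ m = 3) ∧ a + m ≤ n ∧
      ((∀ j ≤ m, f a ≤ f (a + j) ∧ f (a + j) ≤ f (a + m)) ∨
       (∀ j ≤ m, f (a + m) ≤ f (a + j) ∧ f (a + j) ≤ f a)) := by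
  by_contra hno
  have H : ∀ a m, (m = 2 ∨ m = 3) → a + m ≤ n →
      ¬ ((∀ j ≤ m, f a ≤ f (a + j) ∧ f (a + j) ≤ f (a + m)) ∨
         (∀ j ≤ m, f (a + m) ≤ f (a + j) ∧ f (a + j) ≤ f a)) :=
    fun a m h1 h2 hc => hno ⟨a, m, h1, h2, hc⟩
  have PV : ∀ a, a + 2 ≤ n →
      (f (a + 1) < f a ∧ f (a + 1) < f (a + 2)) ∨
      (f a < f (a + 1) ∧ f (a + 2) < f (a + 1)) := by
    intro a ha
    have h2 := H a 2 (Or.inl rfl) ha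
    have hasc : ¬ (f a ≤ f (a + 1) ∧ f (a + 1) ≤ f (a + 2)) := by
      rintro ⟨u, v⟩
      exact h2 (Or.inl (by
        intro j hj; interval_cases j <;> constructor <;>
          (try simp only [add_zero]) <;> linarith))
    have hdesc : ¬ (f (a + 1) ≤ f a ∧ f (a + 2) ≤ f (a + 1)) := by
      rintro ⟨u, v⟩
      exact h2 (Or.inr (by
        intro j hj; interval_cases j <;> constructor <;>
          (try simp only [add_zero]) <;> linarith))
    by_contra hc
    push_neg at hc
    obtain ⟨c1, c2⟩ := hc
    rcases lt_trichotomy (f a) (f (a + 1)) with h1 | h1 | h1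
    · exact hasc ⟨le_of_lt h1, c2 h1⟩
    · rcases le_total (f (a + 1)) (f (a + 2)) with h' | h'
      · exact hasc ⟨le_of_eq h1, h'⟩
      · exact hdesc ⟨le_of_eq h1.symm, h'⟩
    · exact hdesc ⟨le_of_lt h1, c1 h1⟩
  have sgn : ∀ i, i + 1 ≤ n →
      (i % 2 = 0 → f i < f (i + 1)) ∧ (i % 2 = 1 → f (i + 1) < f i) := by
    intro i
    induction i with
    | zero =>
      intro _
      refine ⟨fun _ => ?_, fun h => by omega⟩
      rcases PV 0 hn with ⟨h1, _⟩ | ⟨h1, _⟩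
      · have h0 := (hf 1 (by omega)).1
        have e1 : (0 : ℕ) + 1 = 1 := rfl
        rw [e1] at h1 ⊢
        linarith
      · exact h1
    | succ i ih =>
      intro h
      have hpv := PV i (by omega)
      have hi := ih (by omega)
      have e2 : i + 1 + 1 = i + 2 := rfl
      rw [e2]
      rcases Nat.mod_two_eq_zero_or_one i with he | he
      · have h1 := hi.1 he
        have hpk : f (i + 2) < f (i + 1) := by
          rcases hpv with ⟨hv, _⟩ | ⟨_, hp⟩
          · linarith
          · exact hp
        exact ⟨fun h' => by omega, fun _ => hpk⟩
      · have h1 := hi.2 he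
        have hv : f (i + 1) < f (i + 2) := by
          rcases hpv with ⟨_, hv⟩ | ⟨hp, _⟩
          · exact hv
          · linarith
        exact ⟨fun _ => hv, fun h' => by omega⟩
  have cch : ∀ i, i + 2 ≤ n →
      (i % 2 = 0 → f i ≤ f (i + 2)) ∧ (i % 2 = 1 → f (i + 2) < f i) := by
    intro i
    induction i with
    | zero =>
      intro _
      refine ⟨fun _ => ?_, fun h => by omega⟩
      have h0 := (hf 2 hn).1
      have e2 : (0 : ℕ) + 2 = 2 := rfl
      rw [e2]
      exact h0
    | succ i ih =>
      intro h
      have hi := ih (by omega)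
      have h3 := H i 3 (Or.inr rfl) (by omega)
      have s0 := sgn i (by omega)
      have s1 := sgn (i + 1) (by omega)
      have s2 := sgn (i + 2) (by omega)
      have e2 : i + 1 + 1 = i + 2 := rfl
      have e3 : i + 2 + 1 = i + 3 := rfl
      have e3' : i + 1 + 2 = i + 3 := rfl
      rw [e2] at s1
      rw [e3] at s2
      rw [e3']
      rcases Nat.mod_two_eq_zero_or_one i with he | he
      · have h1 : f i < f (i + 1) := s0.1 he
        have h2 : f (i + 2) < f (i + 1) := s1.2 (by omega)
        have h3' : f (i + 2) < f (i + 3) := s2.1 (by omega)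
        have hc0 : f i ≤ f (i + 2) := hi.1 he
        refine ⟨fun h' => by omega, fun _ => ?_⟩
        by_contra hcon
        push_neg at hcon
        apply h3
        left
        intro j hj
        interval_cases j <;> constructor <;> (try simp only [add_zero]) <;> linarith
      · have h1 : f (i + 1) < f i := s0.2 he
        have h2 : f (i + 1) < f (i + 2) := s1.1 (by omega)
        have h3' : f (i + 3) < f (i + 2) := s2.2 (by omega)
        have hc0 : f (i + 2) < f i := hi.2 he
        refine ⟨fun _ => ?_, fun h' => by omega⟩
        by_contra hcon
        push_neg at hcon
        apply h3
        right
        intro j hj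
        interval_cases j <;> constructor <;> (try simp only [add_zero]) <;> linarith
  have s := sgn (n - 1) (by omega)
  have en1 : n - 1 + 1 = n := by omega
  rw [en1] at s
  have hEn1 : (n - 1) % 2 = 0 := by
    by_contra hodd
    have h1 := s.2 (by omega)
    have h2 := (hf (n - 1) (by omega)).2
    linarith
  have c := cch (n - 2) (by omega)
  have en2 : n - 2 + 2 = n := by omega
  rw [en2] at c
  have h1 := c.2 (by omega)
  have h2 := (hf (n - 2) (by omega)).2
  linarith

lemma charge_le (B : ℝ) (g : ℕ → ℝ) : ∀ i, charge B B g i ≤ B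
  | 0 => le_rfl
  | _ + 1 => min_le_right _ _

lemma feasible_sub (B : ℝ) (g : ℕ → ℝ) (n a m : ℕ) (h : Feasible B B g n) (hm : a + m ≤ n) :
    Feasible B B (SubPath g a) m := by
  have key : ∀ j, charge B B g (a + j) ≤ charge B B (SubPath g a) j := by
    intro j
    induction j with
    | zero => exact charge_le B g a
    | succ j ih =>
      show min (charge B B g (a + j) + g (a + j)) B ≤
        min (charge B B (SubPath g a) j + SubPath g a j) B
      exact min_le_min (by simpa only [SubPath] using add_le_add_left ih (g (a + j))) le_rfl
  intro i hi
  have h1 := h (a + i) (by omega)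
  have h2 := key i
  show 0 ≤ charge B B (SubPath g a) i + g (a + i)
  linarith

lemma cGain_succ (g C : ℕ → ℝ) (i : ℕ) :
    cGain g C (i + 1) = cGain g C i + g i - C (i + 1) := by
  unfold cGain vGain
  rw [Finset.sum_range_succ (f := g), Finset.sum_range_succ (f := C)]
  ring

lemma cGain_zero (g C : ℕ → ℝ) : cGain g C 0 = - C 0 := by
  unfold cGain vGain
  simp

lemma cGain_sub (g C : ℕ → ℝ) (a : ℕ) :
    ∀ j, cGain (SubPath g a) (restrict C a) j = cGain g C (a + j) - cGain g C a := by
  intro j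
  induction j with
  | zero =>
    rw [cGain_zero]
    simp [restrict]
  | succ j ih =>
    rw [cGain_succ, ih]
    have e : a + (j + 1) = (a + j) + 1 := rfl
    rw [e, cGain_succ g C (a + j)]
    have e1 : SubPath g a j = g (a + j) := rfl
    have e2 : restrict C a (j + 1) = C (a + j + 1) := by
      simp only [restrict, Nat.succ_ne_zero, if_false]
      rw [← Nat.add_assoc]
    rw [e1, e2]
    ring

/-- Every path with at least two arcs that is monotone with respect to a
charge drop schedule `C` contains a short (2 or 3 arcs) monotone subpath with respect to
the restriction of `C` to that subpath. -/
theorem short_monotone_subpath (B : ℝ) (hB : 0 < B) (g C : ℕ → ℝ) (n : ℕ) (hn : 2 ≤ n)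
    (hC : Schedule C n) (h : MonotoneC B g C n) :
    ∃ a m, (m = 2 ∨ m = 3) ∧ a + m ≤ n ∧ MonotoneC B (SubPath g a) (restrict C a) m := by
  have hf0 : cGain g C 0 = 0 := by rw [cGain_zero, hC.1, neg_zero]
  have ht : Traversable B g n := h.elim And.left And.left
  have hkey : ∃ a m, (m = 2 ∨ m = 3) ∧ a + m ≤ n ∧
      ((∀ j ≤ m, cGain g C a ≤ cGain g C (a + j) ∧ cGain g C (a + j) ≤ cGain g C (a + m)) ∨
       (∀ j ≤ m, cGain g C (a + m) ≤ cGain g C (a + j) ∧ cGain g C (a + j) ≤ cGain g C a)) := by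
    rcases h with ⟨_, hasc⟩ | ⟨_, hdesc⟩
    · exact key_asc (cGain g C) n hn (fun i hi =>
        ⟨by rw [hf0]; exact (hasc i hi).1,
         (hasc i hi).2⟩)
    · obtain ⟨a, m, hm, ham, hw⟩ := key_asc (fun i => - cGain g C i) n hn (fun i hi =>
        ⟨by simp only [neg_le_neg_iff]; rw [hf0]; exact (hdesc i hi).2,
         by simp only [neg_le_neg_iff]; exact (hdesc i hi).1⟩)
      refine ⟨a, m, hm, ham, ?_⟩
      rcases hw with hw | hw
      · exact Or.inr (fun j hj => ⟨by have := (hw j hj).2; simpa using this,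
          by have := (hw j hj).1; simpa using this⟩)
      · exact Or.inl (fun j hj => ⟨by have := (hw j hj).2; simpa using this,
          by have := (hw j hj).1; simpa using this⟩)
  obtain ⟨a, m, hm, ham, hw⟩ := hkey
  refine ⟨a, m, hm, ham, ?_⟩
  have hT : Traversable B (SubPath g a) m := feasible_sub B g n a m ht ham
  have hcg := cGain_sub g C a
  rcases hw with hw | hw
  · exact Or.inl ⟨hT, fun i hi =>
      ⟨by rw [hcg]; linarith [(hw i hi).1], by rw [hcg, hcg]; linarith [(hw i hi).2]⟩⟩
  · exact Or.inr ⟨hT, fun i hi =>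
      ⟨by rw [hcg, hcg]; linarith [(hw i hi).1], by rw [hcg]; linarith [(hw i hi).2]⟩⟩

end

end EV
end

section
/- Let P be a path from x to y. If α_0(P) = B, i.e., P can be traversed starting with zero charge and the final charge at y equals the full battery capacity B, then P is ascending (with respect to the zero schedule). -/
open Finset

namespace EV

noncomputable section

/-! The capacity only ever lowers the charge, so starting empty the charge after `i` arcs lies
between `0` (feasibility) and `g_{v_i}`, and over the remaining arcs it can grow by at most
`g_{v_n} - g_{v_i}`. Ending at `B` therefore forces `B ≤ B + g_{v_n} - g_{v_i}`. Traversability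
from a full battery holds because the charge is monotone in the initial charge. -/

section Charge

variable {B : ℝ} {g : ℕ → ℝ}

lemma vGain_zero : vGain g 0 = 0 := by
  simp [vGain]

lemma vGain_succ (i : ℕ) : vGain g (i + 1) = vGain g i + g i := by
  simp [vGain, Finset.sum_range_succ]

lemma cGain_zero_schedule (i : ℕ) : cGain g (fun _ => 0) i = vGain g i := by
  simp [cGain]

lemma charge_le_capacity {b : ℝ} (hb : b ≤ B) : ∀ i, charge B b g i ≤ B
  | 0 => hb
  | _ + 1 => min_le_right _ _

lemma charge_mono {b b' : ℝ} (hbb' : b ≤ b') : ∀ i, charge B b g i ≤ charge B b' g i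
  | 0 => hbb'
  | i + 1 => min_le_min_right B (by linarith [charge_mono hbb' i])

lemma charge_le_charge_add_vGain_sub (b : ℝ) {i j : ℕ} (hij : i ≤ j) :
    charge B b g j ≤ charge B b g i + (vGain g j - vGain g i) := by
  induction j, hij using Nat.le_induction with
  | base => simp
  | succ j _ ih =>
    calc charge B b g (j + 1) ≤ charge B b g j + g j := min_le_left _ _
      _ ≤ charge B b g i + (vGain g (j + 1) - vGain g i) := by
        rw [vGain_succ]; linarith

lemma charge_le_add_vGain (b : ℝ) (i : ℕ) : charge B b g i ≤ b + vGain g i := by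
  simpa [charge, vGain_zero] using
    charge_le_charge_add_vGain_sub (B := B) (g := g) b (Nat.zero_le i)

lemma Feasible.charge_nonneg {b : ℝ} {n : ℕ} (hB : 0 ≤ B) (hb : 0 ≤ b)
    (hf : Feasible B b g n) : ∀ i ≤ n, 0 ≤ charge B b g i
  | 0, _ => hb
  | i + 1, hi => le_min (hf i (by omega)) hB

lemma Feasible.mono {b b' : ℝ} {n : ℕ} (hf : Feasible B b g n) (hbb' : b ≤ b') :
    Feasible B b' g n :=
  fun i hi => by linarith [hf i hi, charge_mono (B := B) (g := g) hbb' i]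

lemma alpha_eq_coe_iff {b x : ℝ} {n : ℕ} :
    alpha B b g n = (x : EReal) ↔ Feasible B b g n ∧ charge B b g n = x := by
  unfold alpha
  split_ifs with hf <;> simp [hf]

end Charge

/-- If `α_0(P) = B`, i.e. `P` can be traversed starting with zero charge and
the final charge equals the full battery capacity `B`, then `P` is ascending. -/
theorem ascending_of_alpha_zero_eq_full (B : ℝ) (hB : 0 < B) (g : ℕ → ℝ) (n : ℕ)
    (h : alpha B 0 g n = ((B : ℝ) : EReal)) :
    Ascending B g n := by
  obtain ⟨hf, hfull⟩ := alpha_eq_coe_iff.1 h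
  refine ⟨hf.mono hB.le, fun i hi => ?_⟩
  rw [cGain_zero_schedule, cGain_zero_schedule]
  have hnonneg := hf.charge_nonneg hB.le le_rfl i hi
  have hcap := charge_le_capacity (g := g) hB.le i
  have hprefix := charge_le_add_vGain (B := B) (g := g) 0 i
  have hsuffix := charge_le_charge_add_vGain_sub (B := B) (g := g) 0 hi
  rw [hfull] at hsuffix
  constructor <;> linarith

end

end EV
end
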